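/- There exists a constant C > 0 such that for every natural number N, every t > 0 and every continuous function ψ : [0,1] → ℝ, ( ∫₀¹ | Σ_{k=1}^N kπ · e^{−t k²π²} · ( ∫₀¹ ψ(y)² cos(kπy) dy ) · sin(kπx) |⁴ dx )^{1/4} ≤ C · t^{−5/8} · ( ∫₀¹ ψ(y)⁴ dy )^{1/2}. -/

import Mathlib

/-!
Write `g = ∑ₖ bₖ sin((k+1)πx)` with `bₖ = aₖ cₖ`, where `aₖ = (k+1)π e^{-t(k+1)²π²}` and `cₖ` is the
`k`-th cosine coefficient of `ψ²`. Interpolating, `‖g‖₄⁴ ≤ ‖g‖∞² ‖g‖₂²`; orthogonality of the sines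
gives `‖g‖₂² = ½ ∑ bₖ² ≤ ½ (sup aₖ²) ∑ cₖ²`, and Cauchy–Schwarz gives
`‖g‖∞ ≤ ∑ |bₖ| ≤ (∑ aₖ²)^{1/2} (∑ cₖ²)^{1/2}`. Bessel's inequality for the cosines bounds
`∑ cₖ² ≤ ½ ‖ψ²‖₂² = ½ ‖ψ‖₄⁴`. Finally `λ e^{-tλ} ≤ 1/t` yields `aₖ² ≤ t⁻¹ e^{-tπ²(k+1)²}`, so
`sup aₖ² ≤ t⁻¹`, and comparing with the Gaussian integral, `∑ aₖ² ≤ t^{-3/2}`. Altogether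
`‖g‖₄⁴ ≤ t^{-5/2} ‖ψ‖₄⁸ / 8`, so `C = 1` works.
-/

open Real Finset intervalIntegral

lemma integral_cos_int_mul_pi (m : ℤ) :
    ∫ y in (0:ℝ)..1, cos (m * π * y) = if m = 0 then 1 else 0 := by
  split_ifs with hm
  · simp [hm]
  · have hmπ : (m * π : ℝ) ≠ 0 := mul_ne_zero (Int.cast_ne_zero.mpr hm) pi_ne_zero
    simp [integral_comp_mul_left (fun y => cos y) hmπ, sin_int_mul_pi]

lemma integral_cos_succ_mul_pi_sub (k j : ℕ) :
    ∫ y in (0:ℝ)..1, cos (((k:ℝ) + 1) * π * y - ((j:ℝ) + 1) * π * y) = if k = j then 1 else 0 := by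
  have h := integral_cos_int_mul_pi ((k:ℤ) - j)
  push_cast at h
  simp only [sub_eq_zero, Nat.cast_inj] at h
  rw [← h]
  congr 1; ext y; ring_nf

lemma integral_cos_succ_mul_pi_add (k j : ℕ) :
    ∫ y in (0:ℝ)..1, cos (((k:ℝ) + 1) * π * y + ((j:ℝ) + 1) * π * y) = 0 := by
  have h := integral_cos_int_mul_pi ((k:ℤ) + j + 2)
  rw [if_neg (by omega)] at h
  push_cast at h
  rw [← h]
  congr 1; ext y; ring_nf

lemma integral_cos_mul_cos_succ_mul_pi (k j : ℕ) :
    ∫ y in (0:ℝ)..1, cos (((k:ℝ) + 1) * π * y) * cos (((j:ℝ) + 1) * π * y)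
      = if k = j then 1 / 2 else 0 := by
  simp_rw [fun x y : ℝ => show cos x * cos y = (cos (x - y) + cos (x + y)) / 2 by
    linarith [two_mul_cos_mul_cos x y]]
  rw [integral_div, integral_add (by apply Continuous.intervalIntegrable; fun_prop)
    (by apply Continuous.intervalIntegrable; fun_prop), integral_cos_succ_mul_pi_sub,
    integral_cos_succ_mul_pi_add]
  split_ifs <;> norm_num

lemma integral_sin_mul_sin_succ_mul_pi (k j : ℕ) :
    ∫ y in (0:ℝ)..1, sin (((k:ℝ) + 1) * π * y) * sin (((j:ℝ) + 1) * π * y)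
      = if k = j then 1 / 2 else 0 := by
  simp_rw [fun x y : ℝ => show sin x * sin y = (cos (x - y) - cos (x + y)) / 2 by
    linarith [two_mul_sin_mul_sin x y]]
  rw [integral_div, integral_sub (by apply Continuous.intervalIntegrable; fun_prop)
    (by apply Continuous.intervalIntegrable; fun_prop), integral_cos_succ_mul_pi_sub,
    integral_cos_succ_mul_pi_add]
  split_ifs <;> norm_num

section OrthogonalFamily

variable {a b ν : ℝ} {e : ℕ → ℝ → ℝ}

lemma integral_sq_sum_of_orthogonal (he : ∀ k, Continuous (e k))
    (horth : ∀ k j, ∫ y in a..b, e k y * e j y = if k = j then ν else 0) (N : ℕ) (d : ℕ → ℝ) :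
    ∫ y in a..b, (∑ k ∈ range N, d k * e k y) ^ 2 = ν * ∑ k ∈ range N, d k ^ 2 := by
  have hexpand : ∀ y, (∑ k ∈ range N, d k * e k y) ^ 2
      = ∑ k ∈ range N, ∑ j ∈ range N, d k * d j * (e k y * e j y) := fun y => by
    rw [sq, sum_mul_sum]
    exact sum_congr rfl fun k _ => sum_congr rfl fun j _ => by ring
  simp_rw [hexpand]
  rw [integral_finsetSum fun k _ => (by fun_prop : Continuous _).intervalIntegrable _ _,
    mul_sum]
  refine sum_congr rfl fun k hk => ?_
  rw [integral_finsetSum fun j _ => (by fun_prop : Continuous _).intervalIntegrable _ _]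
  simp_rw [integral_const_mul, horth, mul_ite, mul_zero]
  rw [sum_ite_eq, if_pos hk]
  ring

/-- Bessel's inequality. -/
lemma sum_sq_integral_mul_le_of_orthogonal (hab : a ≤ b) (hν : 0 < ν)
    (he : ∀ k, Continuous (e k))
    (horth : ∀ k j, ∫ y in a..b, e k y * e j y = if k = j then ν else 0)
    {f : ℝ → ℝ} (hf : ContinuousOn f (Set.uIcc a b)) (N : ℕ) :
    ∑ k ∈ range N, (∫ y in a..b, f y * e k y) ^ 2 ≤ ν * ∫ y in a..b, f y ^ 2 := by
  set c : ℕ → ℝ := fun k => ∫ y in a..b, f y * e k y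
  set S : ℝ → ℝ := fun y => ∑ k ∈ range N, c k / ν * e k y
  have hS : Continuous S := by fun_prop
  have hfS : ∫ y in a..b, f y * S y = (∑ k ∈ range N, c k ^ 2) / ν := by
    simp_rw [S, mul_sum, fun y k => show f y * (c k / ν * e k y) = c k / ν * (f y * e k y) by ring]
    rw [integral_finsetSum (f := fun k y => c k / ν * (f y * e k y)) fun k _ =>
      ((hf.mul (he k).continuousOn).intervalIntegrable).const_mul _, sum_div]
    simp_rw [integral_const_mul]
    exact sum_congr rfl fun k _ => by ring
  have hSS : ∫ y in a..b, S y ^ 2 = (∑ k ∈ range N, c k ^ 2) / ν := by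
    rw [integral_sq_sum_of_orthogonal he horth, mul_sum, sum_div]
    exact sum_congr rfl fun k _ => by field_simp
  have hpos : 0 ≤ ∫ y in a..b, (f y - S y) ^ 2 :=
    integral_nonneg hab fun y _ => sq_nonneg _
  have hf2 : IntervalIntegrable (fun y => f y ^ 2) MeasureTheory.volume a b :=
    (hf.pow 2).intervalIntegrable
  have hfS' : IntervalIntegrable (fun y => 2 * (f y * S y)) MeasureTheory.volume a b :=
    ((hf.mul hS.continuousOn).intervalIntegrable).const_mul 2
  have hS2 : IntervalIntegrable (fun y => S y ^ 2) MeasureTheory.volume a b :=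
    (hS.pow 2).intervalIntegrable a b
  simp_rw [fun y => show (f y - S y) ^ 2 = f y ^ 2 - 2 * (f y * S y) + S y ^ 2 by ring] at hpos
  rw [integral_add (hf2.sub hfS') hS2, integral_sub hf2 hfS', integral_const_mul, hfS, hSS]
    at hpos
  rw [← div_le_iff₀' hν]
  linarith

end OrthogonalFamily

lemma integral_pow_four_le_sq_mul_integral_sq {a b M : ℝ} (hab : a ≤ b) {g : ℝ → ℝ}
    (hg : Continuous g) (hM : ∀ x, |g x| ≤ M) :
    ∫ x in a..b, g x ^ 4 ≤ M ^ 2 * ∫ x in a..b, g x ^ 2 := by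
  rw [← integral_const_mul]
  refine integral_mono_on hab ((hg.pow 4).intervalIntegrable _ _)
    ((continuous_const.mul (hg.pow 2)).intervalIntegrable _ _) fun x _ => ?_
  have hsq : g x ^ 2 ≤ M ^ 2 := sq_le_sq' (abs_le.mp (hM x)).1 (abs_le.mp (hM x)).2
  calc g x ^ 4 = g x ^ 2 * g x ^ 2 := by ring
    _ ≤ M ^ 2 * g x ^ 2 := mul_le_mul_of_nonneg_right hsq (sq_nonneg _)

lemma sum_range_exp_neg_mul_sq_le {A : ℝ} (hA : 0 < A) (N : ℕ) :
    ∑ k ∈ range N, exp (-A * ((k:ℝ) + 1) ^ 2) ≤ √(π / A) / 2 := by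
  have hanti : AntitoneOn (fun x : ℝ => exp (-A * x ^ 2)) (Set.Icc 0 (0 + N)) :=
    fun x hx y _ hxy => exp_le_exp.mpr <| by
      have := pow_le_pow_left₀ hx.1 hxy 2
      nlinarith
  calc ∑ k ∈ range N, exp (-A * ((k:ℝ) + 1) ^ 2)
      ≤ ∫ x in (0:ℝ)..N, exp (-A * x ^ 2) := by simpa using hanti.sum_le_integral
    _ = ∫ x in Set.Ioc 0 (N:ℝ), exp (-A * x ^ 2) := integral_of_le N.cast_nonneg
    _ ≤ ∫ x in Set.Ioi 0, exp (-A * x ^ 2) :=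
        MeasureTheory.setIntegral_mono_set (integrable_exp_neg_mul_sq hA).integrableOn
          (.of_forall fun _ => (exp_pos _).le) (.of_forall Set.Ioc_subset_Ioi_self)
    _ = √(π / A) / 2 := integral_gaussian_Ioi A

lemma sq_mul_exp_neg_mul_sq_le {t : ℝ} (ht : 0 < t) (x : ℝ) :
    (x * exp (-t * x ^ 2)) ^ 2 ≤ t⁻¹ * exp (-t * x ^ 2) := by
  have h : t * x ^ 2 * exp (-(t * x ^ 2)) ≤ 1 :=
    (mul_exp_neg_le_exp_neg_one _).trans (by simp)
  calc (x * exp (-t * x ^ 2)) ^ 2 = t⁻¹ * (t * x ^ 2 * exp (-(t * x ^ 2))) * exp (-t * x ^ 2) := by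
        field_simp
    _ ≤ t⁻¹ * 1 * exp (-t * x ^ 2) := by gcongr
    _ = t⁻¹ * exp (-t * x ^ 2) := by ring

noncomputable def heatWeight (t : ℝ) (k : ℕ) : ℝ :=
  ((k:ℝ) + 1) * π * exp (-t * (((k:ℝ) + 1) ^ 2 * π ^ 2))

lemma heatWeight_sq_le_mul_exp {t : ℝ} (ht : 0 < t) (k : ℕ) :
    heatWeight t k ^ 2 ≤ t⁻¹ * exp (-(t * π ^ 2) * ((k:ℝ) + 1) ^ 2) := by
  calc heatWeight t k ^ 2 = (((k:ℝ) + 1) * π * exp (-t * (((k:ℝ) + 1) * π) ^ 2)) ^ 2 := by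
        rw [heatWeight, mul_pow _ π 2]
    _ ≤ t⁻¹ * exp (-t * (((k:ℝ) + 1) * π) ^ 2) := sq_mul_exp_neg_mul_sq_le ht _
    _ = t⁻¹ * exp (-(t * π ^ 2) * ((k:ℝ) + 1) ^ 2) := by ring_nf

lemma heatWeight_sq_le {t : ℝ} (ht : 0 < t) (k : ℕ) : heatWeight t k ^ 2 ≤ t⁻¹ :=
  (heatWeight_sq_le_mul_exp ht k).trans <|
    mul_le_of_le_one_right (inv_nonneg.mpr ht.le) (exp_le_one_iff.mpr (by
      have : 0 ≤ t * π ^ 2 * ((k:ℝ) + 1) ^ 2 := by positivity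
      linarith))

lemma sum_heatWeight_sq_le {t : ℝ} (ht : 0 < t) (N : ℕ) :
    ∑ k ∈ range N, heatWeight t k ^ 2 ≤ (t * √t)⁻¹ := by
  have hgauss : √(π / (t * π ^ 2)) / 2 ≤ (√t)⁻¹ := by
    rw [← sqrt_inv]
    have : π / (t * π ^ 2) ≤ t⁻¹ := by
      rw [div_le_iff₀ (by positivity)]
      field_simp
      linarith [pi_gt_three]
    linarith [sqrt_le_sqrt this, sqrt_nonneg (π / (t * π ^ 2))]
  calc ∑ k ∈ range N, heatWeight t k ^ 2
      ≤ ∑ k ∈ range N, t⁻¹ * exp (-(t * π ^ 2) * ((k:ℝ) + 1) ^ 2) :=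
        sum_le_sum fun k _ => heatWeight_sq_le_mul_exp ht k
    _ ≤ t⁻¹ * (√t)⁻¹ := by
        rw [← mul_sum]
        gcongr
        exact (sum_range_exp_neg_mul_sq_le (by positivity) N).trans hgauss
    _ = (t * √t)⁻¹ := (mul_inv t _).symm

lemma rpow_one_fourth_le_of_le_div {t Q X : ℝ} (ht : 0 < t) (hQ : 0 ≤ Q) (hX₀ : 0 ≤ X)
    (hX : X ≤ Q ^ 2 / (t ^ 2 * √t)) :
    X ^ ((1:ℝ) / 4) ≤ t ^ (-(5:ℝ) / 8) * Q ^ ((1:ℝ) / 2) := by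
  have ht' : t ^ 2 * √t = t ^ ((5:ℝ) / 2) := by
    rw [sqrt_eq_rpow, ← rpow_natCast, ← rpow_add ht]
    norm_num
  calc X ^ ((1:ℝ) / 4) ≤ (Q ^ 2 / t ^ ((5:ℝ) / 2)) ^ ((1:ℝ) / 4) := by
        rw [← ht']; gcongr
    _ = t ^ (-(5:ℝ) / 8) * Q ^ ((1:ℝ) / 2) := by
        rw [div_rpow (by positivity) (by positivity), ← rpow_natCast, ← rpow_mul hQ,
          ← rpow_mul ht.le, div_eq_mul_inv, mul_comm, ← rpow_neg ht.le]
        norm_num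

lemma integral_sin_series_pow_four_le (N : ℕ) (b : ℕ → ℝ) :
    ∫ x in (0:ℝ)..1, (∑ k ∈ range N, b k * sin (((k:ℝ) + 1) * π * x)) ^ 4
      ≤ (∑ k ∈ range N, |b k|) ^ 2 * (1 / 2 * ∑ k ∈ range N, b k ^ 2) := by
  have hsup : ∀ x, |∑ k ∈ range N, b k * sin (((k:ℝ) + 1) * π * x)| ≤ ∑ k ∈ range N, |b k| :=
    fun x => (abs_sum_le_sum_abs _ _).trans <| sum_le_sum fun k _ => by
      rw [abs_mul]
      exact mul_le_of_le_one_right (abs_nonneg _) (abs_sin_le_one _)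
  rw [← integral_sq_sum_of_orthogonal (fun k => by fun_prop) integral_sin_mul_sin_succ_mul_pi]
  exact integral_pow_four_le_sq_mul_integral_sq zero_le_one (by fun_prop) hsup

lemma integral_abs_sin_series_mul_pow_four_le {N : ℕ} {a : ℕ → ℝ} {A S : ℝ}
    (hA : ∀ k, a k ^ 2 ≤ A) (hS : ∑ k ∈ range N, a k ^ 2 ≤ S) (c : ℕ → ℝ) :
    ∫ x in (0:ℝ)..1, |∑ k ∈ range N, a k * c k * sin (((k:ℝ) + 1) * π * x)| ^ 4
      ≤ S * A * (∑ k ∈ range N, c k ^ 2) ^ 2 / 2 := by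
  have hcs : (∑ k ∈ range N, |a k * c k|) ^ 2 ≤ S * ∑ k ∈ range N, c k ^ 2 := by
    simp_rw [abs_mul]
    refine (sum_mul_sq_le_sq_mul_sq _ _ _).trans ?_
    simp_rw [sq_abs]
    gcongr
  have hl2 : ∑ k ∈ range N, (a k * c k) ^ 2 ≤ A * ∑ k ∈ range N, c k ^ 2 := by
    rw [mul_sum]
    exact sum_le_sum fun k _ => by rw [mul_pow]; gcongr; exact hA k
  simp_rw [(by decide : Even 4).pow_abs]
  calc _ ≤ (∑ k ∈ range N, |a k * c k|) ^ 2 * (1 / 2 * ∑ k ∈ range N, (a k * c k) ^ 2) :=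
        integral_sin_series_pow_four_le N _
    _ ≤ (S * ∑ k ∈ range N, c k ^ 2) * (1 / 2 * (A * ∑ k ∈ range N, c k ^ 2)) := by
        gcongr
        exact (sq_nonneg _).trans hcs
    _ = S * A * (∑ k ∈ range N, c k ^ 2) ^ 2 / 2 := by ring

/-- `‖P_N S(t) B(ψ)‖_{L⁴(0,1)} ≤ C t^{-5/8} ‖ψ‖²_{L⁴(0,1)}` in explicit spectral form. -/
theorem stmt16 :
    ∃ C : ℝ, 0 < C ∧ ∀ (N : ℕ) (t : ℝ), 0 < t → ∀ ψ : ℝ → ℝ,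
      ContinuousOn ψ (Set.Icc 0 1) →
      (∫ x in (0:ℝ)..1,
        |∑ k ∈ Finset.range N,
          ((((k:ℝ)+1) * Real.pi) * Real.exp (-t * (((k:ℝ)+1)^2 * Real.pi^2))) *
            (∫ y in (0:ℝ)..1, (ψ y)^2 * Real.cos (((k:ℝ)+1) * Real.pi * y)) *
            Real.sin (((k:ℝ)+1) * Real.pi * x)| ^ 4) ^ ((1:ℝ)/4)
      ≤ C * t ^ (-(5:ℝ)/8) * (∫ y in (0:ℝ)..1, (ψ y)^4) ^ ((1:ℝ)/2) := by
  refine ⟨1, one_pos, fun N t ht ψ hψ => ?_⟩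
  set Q := ∫ y in (0:ℝ)..1, ψ y ^ 4
  have hQ : 0 ≤ Q := integral_nonneg zero_le_one fun y _ => by positivity
  have hbessel : ∑ k ∈ range N, (∫ y in (0:ℝ)..1, ψ y ^ 2 * cos (((k:ℝ) + 1) * π * y)) ^ 2
      ≤ 1 / 2 * Q := by
    have h := sum_sq_integral_mul_le_of_orthogonal zero_le_one one_half_pos
      (fun k => by fun_prop) integral_cos_mul_cos_succ_mul_pi (f := fun y => ψ y ^ 2)
      (by rw [Set.uIcc_of_le zero_le_one]; exact hψ.pow 2) N
    simpa only [← pow_mul] using h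
  have h4 := integral_abs_sin_series_mul_pow_four_le (heatWeight_sq_le ht)
    (sum_heatWeight_sq_le ht N) (fun k => ∫ y in (0:ℝ)..1, ψ y ^ 2 * cos (((k:ℝ) + 1) * π * y))
  rw [one_mul]
  refine rpow_one_fourth_le_of_le_div ht hQ (integral_nonneg zero_le_one fun x _ => by positivity)
    (h4.trans ?_)
  calc _ ≤ (t * √t)⁻¹ * t⁻¹ * (1 / 2 * Q) ^ 2 / 2 := by gcongr
    _ = Q ^ 2 / (t ^ 2 * √t) / 8 := by field_simp; ring
    _ ≤ Q ^ 2 / (t ^ 2 * √t) := div_le_self (by positivity) (by norm_num)
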